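/- In the setting of the family (A_λ), set δ := (1/c) · inf_{v ≥ 1} p(v), which is strictly positive. Then for all λ ∈ (0, 1] and all t ≥ 1 one has Φ_{A_λ}(t) ≤ Φ_{A₀}(δ^α t) / Φ_{A₀}(δ^α). Consequently, Φ_{A_λ}(t) converges to 0 as t → ∞, uniformly in λ ∈ (0, 1]. -/

import Mathlib

open MeasureTheory Filter Set

/-- Hypotheses on the coefficient `A` of the Sturm–Liouville equation: continuous and
strictly positive on `(0,∞)`, integrable in a neighborhood of zero, but not integrable
in a neighborhood of infinity. -/
def SLHyp (A : ℝ → ℝ) : Prop :=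
  ContinuousOn A (Set.Ioi 0) ∧ (∀ t > (0:ℝ), 0 < A t) ∧
  MeasureTheory.IntegrableOn A (Set.Ioc 0 1) ∧
  (∫⁻ t in Set.Ici (1:ℝ), ENNReal.ofReal (A t)) = ⊤

/-- `Φ` is a bounded continuous function on `[0,∞)` with `Φ 0 = 1`, twice differentiable on
`(0,∞)` and satisfying the Sturm–Liouville equation `Φ'' = A Φ` there. -/
def IsSL (A Φ : ℝ → ℝ) : Prop :=
  ContinuousOn Φ (Set.Ici 0) ∧
  (∃ M : ℝ, ∀ t ≥ (0:ℝ), |Φ t| ≤ M) ∧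
  Φ 0 = 1 ∧
  (∀ t > (0:ℝ), DifferentiableAt ℝ Φ t) ∧
  (∀ t > (0:ℝ), HasDerivAt (deriv Φ) (A t * Φ t) t)

open Topology

/-! Since `A ≥ 0`, `Φ²` is convex and bounded, hence nonincreasing; as `A` is locally bounded, a
zero of `Φ` would then propagate leftwards down to `Φ 0 = 1`, so `Φ > 0`, and `Φ` itself is convex,
nonincreasing and at most `1`. Integrating `Φ'' = A Φ` over `[1, t]` with
`A_λ(s) ≥ m s^β` there (`m = inf_{v ≥ 1} p v`, as `s λ^{-α} ≥ s`) gives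
`Φ_{A_λ}(t) ≤ 2 (β + 1) / (m (t^{β+1} - 1))`, uniformly in `λ`. Finally `Ψ t = Φ_{A₀}(δ^α t)`
solves `Ψ'' = m t^β Ψ`, and the Wronskian `Φ Ψ' - Φ' Ψ` of `Φ = Φ_{A_λ}` and `Ψ` is nonincreasing
on `[1, ∞)` with limit `0`, so `Φ / Ψ` is nonincreasing there. -/

lemma ConvexOn.antitoneOn_of_le {f : ℝ → ℝ} {a M : ℝ} (hf : ConvexOn ℝ (Ici a) f)
    (hM : ∀ t ≥ a, f t ≤ M) : AntitoneOn f (Ici a) := by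
  intro x hx y hy hxy
  by_contra! hlt
  have hxy' : x < y := hxy.lt_of_ne (by rintro rfl; exact hlt.false)
  set s := (f y - f x) / (y - x)
  have hs : 0 < s := div_pos (sub_pos.2 hlt) (sub_pos.2 hxy')
  have hline : Tendsto (fun z => f x + s * (z - x)) atTop atTop :=
    tendsto_atTop_add_const_left _ _
      ((tendsto_atTop_add_const_right _ _ tendsto_id).const_mul_atTop hs)
  obtain ⟨z, hyz, hzM⟩ := ((eventually_gt_atTop y).and (hline.eventually_gt_atTop M)).exists
  have hsec := hf.secant_mono_aux2 hx (hy.trans hyz.le) hxy' hyz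
  rw [le_div_iff₀ (by linarith)] at hsec
  linarith [hM z (hx.trans (hxy.trans hyz.le))]

lemma tendsto_div_mul_rpow_sub_one {r m : ℝ} (hr : 0 < r) (hm : 0 < m) (C : ℝ) :
    Tendsto (fun t : ℝ => C / (m * (t ^ r - 1))) atTop (𝓝 0) :=
  tendsto_const_nhds.div_atTop
    ((tendsto_atTop_add_const_right _ _ (tendsto_rpow_atTop hr)).const_mul_atTop hm)

noncomputable def wronskian (f g : ℝ → ℝ) (t : ℝ) : ℝ := f t * deriv g t - deriv f t * g t

namespace IsSL

variable {A B Φ Ψ : ℝ → ℝ}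

lemma differentiableAt (h : IsSL A Φ) {t : ℝ} (ht : 0 < t) : DifferentiableAt ℝ Φ t :=
  h.2.2.2.1 t ht

lemma hasDerivAt (h : IsSL A Φ) {t : ℝ} (ht : 0 < t) : HasDerivAt Φ (deriv Φ t) t :=
  (h.differentiableAt ht).hasDerivAt

lemma hasDerivAt_deriv (h : IsSL A Φ) {t : ℝ} (ht : 0 < t) :
    HasDerivAt (deriv Φ) (A t * Φ t) t :=
  h.2.2.2.2 t ht

lemma convexOn_sq (h : IsSL A Φ) (hA₀ : ∀ t > 0, 0 ≤ A t) :
    ConvexOn ℝ (Ici 0) (fun t => Φ t ^ 2) := by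
  refine convexOn_of_hasDerivWithinAt2_nonneg (convex_Ici 0) (h.1.pow 2)
    (f' := fun t => 2 * Φ t * deriv Φ t)
    (f'' := fun t => 2 * (deriv Φ t ^ 2 + A t * Φ t ^ 2)) ?_ ?_ ?_
  all_goals simp only [interior_Ici, mem_Ioi]
  · intro t ht
    refine (((h.hasDerivAt ht).pow 2).congr_deriv ?_).hasDerivWithinAt
    push_cast; ring
  · intro t ht
    refine ((((h.hasDerivAt ht).const_mul 2).mul (h.hasDerivAt_deriv ht)).congr_deriv
      ?_).hasDerivWithinAt
    ring
  · intro t ht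
    have := hA₀ t ht
    positivity

lemma abs_antitoneOn (h : IsSL A Φ) (hA₀ : ∀ t > 0, 0 ≤ A t) :
    AntitoneOn (fun t => |Φ t|) (Ici 0) := by
  obtain ⟨M, hM⟩ := h.2.1
  have hsq : AntitoneOn (fun t => Φ t ^ 2) (Ici 0) :=
    (h.convexOn_sq hA₀).antitoneOn_of_le (M := M ^ 2) fun t ht =>
      sq_abs (Φ t) ▸ pow_le_pow_left₀ (abs_nonneg _) (hM t ht) 2
  exact fun s hs t ht hst => sq_le_sq.mp (hsq hs ht hst)

lemma deriv_eq_zero_of_eq_zero (h : IsSL A Φ) (hA₀ : ∀ t > 0, 0 ≤ A t) {z : ℝ} (hz : 0 < z)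
    (hΦz : Φ z = 0) : deriv Φ z = 0 := by
  have hzero : HasDerivWithinAt Φ 0 (Ici z) z :=
    (hasDerivWithinAt_const z _ 0).congr (fun t ht => abs_eq_zero.mp <| le_antisymm
      (by simpa [hΦz] using h.abs_antitoneOn hA₀ hz.le (hz.le.trans ht) ht) (abs_nonneg _)) hΦz
  exact (uniqueDiffOn_Ici z z self_mem_Ici).eq_deriv _ (h.hasDerivAt hz).hasDerivWithinAt hzero

/-- With `|A| ≤ K` near `z`, two mean value steps give `|Φ t| ≤ K (z - t)² |Φ t|` for `t < z`,
using `Φ z = Φ' z = 0` and that `|Φ|` is antitone. -/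
lemma eventually_eq_zero_of_eq_zero (h : IsSL A Φ) (hA : ContinuousOn A (Ioi 0))
    (hA₀ : ∀ t > 0, 0 ≤ A t) {z : ℝ} (hz : 0 < z) (hΦz : Φ z = 0) :
    ∀ᶠ t in 𝓝[<] z, Φ t = 0 := by
  obtain ⟨K, hK⟩ := isCompact_Icc.exists_bound_of_continuousOn
    (hA.mono fun x (hx : x ∈ Icc (z / 2) z) => show 0 < x by linarith [hx.1])
  have hsmall : ∀ᶠ t in 𝓝[<] z, K * (z - t) ^ 2 < 1 := by
    refine nhdsWithin_le_nhds (ContinuousAt.eventually_lt (by fun_prop) continuousAt_const ?_)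
    simp
  filter_upwards [hsmall, Ioo_mem_nhdsLT (half_lt_self hz)] with t htK ⟨ht, htz⟩
  have ht0 : 0 < t := by linarith
  obtain ⟨ξ, ⟨htξ, hξz⟩, hξ⟩ := exists_hasDerivAt_eq_slope Φ (deriv Φ) htz
    (fun x hx => (h.hasDerivAt (ht0.trans_le hx.1)).continuousAt.continuousWithinAt)
    (fun x hx => h.hasDerivAt (ht0.trans hx.1))
  obtain ⟨η, ⟨hξη, hηz⟩, hη⟩ := exists_hasDerivAt_eq_slope (deriv Φ) (fun x => A x * Φ x) hξz
    (fun x hx => (h.hasDerivAt_deriv (by linarith [hx.1])).continuousAt.continuousWithinAt)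
    (fun x hx => h.hasDerivAt_deriv (by linarith [hx.1]))
  rw [hΦz, zero_sub] at hξ
  rw [h.deriv_eq_zero_of_eq_zero hA₀ hz hΦz, zero_sub] at hη
  have hΦt : Φ t = A η * Φ η * (z - ξ) * (z - t) := by
    rw [hη, hξ]; field_simp [(sub_pos.2 htz).ne', (sub_pos.2 hξz).ne']
  have hAη : |A η| ≤ K := (Real.norm_eq_abs _).symm ▸ hK η ⟨by linarith, hηz.le⟩
  have hΦη : |Φ η| ≤ |Φ t| :=
    h.abs_antitoneOn hA₀ ht0.le (mem_Ici.2 (by linarith)) (by linarith)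
  have hbound : |Φ t| ≤ K * (z - t) ^ 2 * |Φ t| := by
    have hK0 : 0 ≤ K := (abs_nonneg _).trans hAη
    have hξt : z - ξ ≤ z - t := by linarith
    calc |Φ t| = |A η| * |Φ η| * (z - ξ) * (z - t) := by
          rw [hΦt, abs_mul, abs_mul, abs_mul, abs_of_pos (sub_pos.2 hξz),
            abs_of_pos (sub_pos.2 htz)]
      _ ≤ K * |Φ t| * (z - t) * (z - t) := by gcongr
      _ = K * (z - t) ^ 2 * |Φ t| := by ring
  exact abs_eq_zero.mp (by nlinarith [abs_nonneg (Φ t)])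

theorem pos (h : IsSL A Φ) (hA : ContinuousOn A (Ioi 0)) (hA₀ : ∀ t > 0, 0 ≤ A t) {t : ℝ}
    (ht : 0 ≤ t) : 0 < Φ t := by
  by_contra! hneg
  obtain ⟨z₁, hz₁, hΦz₁⟩ : ∃ z ∈ Icc 0 t, Φ z = 0 :=
    intermediate_value_Icc' ht (h.1.mono Icc_subset_Ici_self) ⟨hneg, by simp [h.2.2.1]⟩
  set Z := Icc 0 t ∩ Φ ⁻¹' {0}
  have hZ : IsCompact Z := isCompact_Icc.of_isClosed_subset
    ((h.1.mono Icc_subset_Ici_self).preimage_isClosed_of_isClosed isClosed_Icc isClosed_singleton)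
    inter_subset_left
  have hzZ : sInf Z ∈ Z := hZ.sInf_mem ⟨z₁, hz₁, hΦz₁⟩
  have hz : 0 < sInf Z := hzZ.1.1.lt_of_ne fun h0 => by
    simpa [← h0, h.2.2.1] using hzZ.2
  obtain ⟨s, hΦs, hs0, hsz⟩ := ((h.eventually_eq_zero_of_eq_zero hA hA₀ hz hzZ.2).and
    (Ioo_mem_nhdsLT hz)).exists
  exact hsz.not_ge (csInf_le hZ.bddBelow ⟨⟨hs0.le, hsz.le.trans hzZ.1.2⟩, hΦs⟩)

section

variable (h : IsSL A Φ) (hA : ContinuousOn A (Ioi 0)) (hA₀ : ∀ t > 0, 0 ≤ A t)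
include h hA hA₀

lemma convexOn : ConvexOn ℝ (Ici 0) Φ := by
  refine convexOn_of_hasDerivWithinAt2_nonneg (convex_Ici 0) h.1 (f' := deriv Φ)
    (f'' := fun t => A t * Φ t) ?_ ?_ ?_
  all_goals simp only [interior_Ici, mem_Ioi]
  · exact fun t ht => (h.hasDerivAt ht).hasDerivWithinAt
  · exact fun t ht => (h.hasDerivAt_deriv ht).hasDerivWithinAt
  · exact fun t ht => mul_nonneg (hA₀ t ht) (h.pos hA hA₀ ht.le).le

lemma antitoneOn : AntitoneOn Φ (Ici 0) := by
  obtain ⟨M, hM⟩ := h.2.1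
  exact (h.convexOn hA hA₀).antitoneOn_of_le fun t ht => le_of_abs_le (hM t ht)

lemma le_one {t : ℝ} (ht : 0 ≤ t) : Φ t ≤ 1 :=
  h.2.2.1 ▸ h.antitoneOn hA hA₀ self_mem_Ici ht ht

lemma monotoneOn_deriv : MonotoneOn (deriv Φ) (Ioi 0) :=
  ((h.convexOn hA hA₀).subset Ioi_subset_Ici_self (convex_Ioi 0)).monotoneOn_deriv
    fun _ ht => h.differentiableAt ht

lemma deriv_nonpos {t : ℝ} (ht : 0 < t) : deriv Φ t ≤ 0 := by
  have ht1 : t + 1 ∈ Ici (0 : ℝ) := mem_Ici.2 (by linarith)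
  refine ((h.convexOn hA hA₀).deriv_le_slope ht.le ht1 (lt_add_one t)
    (h.differentiableAt ht)).trans ?_
  rw [slope_def_field, add_sub_cancel_left, div_one, sub_nonpos]
  exact h.antitoneOn hA hA₀ ht.le ht1 (by linarith)

lemma mul_integral_le_two {t : ℝ} (ht : 1 ≤ t) : Φ t * ∫ s in (1 : ℝ)..t, A s ≤ 2 := by
  have hsub : uIcc 1 t ⊆ Ioi 0 := fun x hx => by
    rw [uIcc_of_le ht] at hx; exact one_pos.trans_le hx.1
  have hAΦ : ContinuousOn (fun s => A s * Φ s) (uIcc 1 t) :=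
    (hA.mono hsub).mul fun x hx => (h.differentiableAt (hsub hx)).continuousAt.continuousWithinAt
  have hftc : ∫ s in (1 : ℝ)..t, A s * Φ s = deriv Φ t - deriv Φ 1 :=
    intervalIntegral.integral_eq_sub_of_hasDerivAt (fun x hx => h.hasDerivAt_deriv (hsub hx))
      hAΦ.intervalIntegrable
  have hslope : slope Φ (1 / 2) 1 ≤ deriv Φ 1 :=
    (h.convexOn hA hA₀).slope_le_deriv (by norm_num) (by norm_num) (by norm_num)
      (h.differentiableAt one_pos)
  rw [slope_def_field] at hslope
  have hΦhalf := h.le_one hA hA₀ (t := 1 / 2) (by norm_num)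
  have hΦ1 := h.pos hA hA₀ zero_le_one
  calc Φ t * ∫ s in (1 : ℝ)..t, A s = ∫ s in (1 : ℝ)..t, Φ t * A s :=
        (intervalIntegral.integral_const_mul _ _).symm
    _ ≤ ∫ s in (1 : ℝ)..t, A s * Φ s := by
        refine intervalIntegral.integral_mono_on ht
          (((hA.mono hsub).intervalIntegrable).const_mul _) hAΦ.intervalIntegrable fun s hs => ?_
        have hs0 : 0 < s := one_pos.trans_le hs.1
        rw [mul_comm]
        exact mul_le_mul_of_nonneg_left (h.antitoneOn hA hA₀ hs0.le (hs0.le.trans hs.2) hs.2)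
          (hA₀ s hs0)
    _ = deriv Φ t - deriv Φ 1 := hftc
    -- `-Φ'(1) ≤ 2 (Φ (1/2) - Φ 1) ≤ 2` by convexity on `[1/2, 1]`
    _ ≤ 2 := by
        have := h.deriv_nonpos hA hA₀ (one_pos.trans_le ht)
        have : (Φ 1 - Φ (1 / 2)) / (1 - 1 / 2) = 2 * (Φ 1 - Φ (1 / 2)) := by ring
        linarith

variable {β m : ℝ} (hβ : -1 < β) (hm : 0 < m) (hAm : ∀ t ≥ 1, m * t ^ β ≤ A t)
include hβ hm hAm

lemma le_div_of_rpow_le {t : ℝ} (ht : 1 < t) :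
    Φ t ≤ 2 * (β + 1) / (m * (t ^ (β + 1) - 1)) := by
  have hβ1 : 0 < β + 1 := by linarith
  have hsub : uIcc 1 t ⊆ Ioi 0 := fun x hx => by
    rw [uIcc_of_le ht.le] at hx; exact one_pos.trans_le hx.1
  have hint : m * (t ^ (β + 1) - 1) / (β + 1) ≤ ∫ s in (1 : ℝ)..t, A s :=
    calc m * (t ^ (β + 1) - 1) / (β + 1) = ∫ s in (1 : ℝ)..t, m * s ^ β := by
          rw [intervalIntegral.integral_const_mul, integral_rpow (Or.inl hβ), Real.one_rpow]
          ring
      _ ≤ ∫ s in (1 : ℝ)..t, A s :=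
          intervalIntegral.integral_mono_on ht.le
            ((intervalIntegral.intervalIntegrable_rpow' hβ).const_mul m)
            (hA.mono hsub).intervalIntegrable fun s hs => hAm s hs.1
  rw [le_div_iff₀ (mul_pos hm (sub_pos.2 (Real.one_lt_rpow ht hβ1)))]
  have := h.mul_integral_le_two hA hA₀ ht.le
  have := h.pos hA hA₀ (zero_le_one.trans ht.le)
  have := (div_le_iff₀ hβ1).1 hint
  nlinarith

lemma tendsto_atTop_zero : Tendsto Φ atTop (𝓝 0) :=
  tendsto_of_tendsto_of_tendsto_of_le_of_le' tendsto_const_nhds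
    (tendsto_div_mul_rpow_sub_one (by linarith) hm _)
    ((eventually_ge_atTop 0).mono fun _ ht => (h.pos hA hA₀ ht).le)
    ((eventually_gt_atTop 1).mono fun _ ht => h.le_div_of_rpow_le hA hA₀ hβ hm hAm ht)

end

lemma comp_mul_left (h : IsSL A Φ) {σ : ℝ} (hσ : 0 < σ)
    (hB : ∀ t > 0, B t = σ ^ 2 * A (σ * t)) : IsSL B (fun t => Φ (σ * t)) := by
  obtain ⟨hcont, ⟨M, hM⟩, h0, hdiff, hode⟩ := h
  have hderiv : deriv (fun t => Φ (σ * t)) = fun t => σ * deriv Φ (σ * t) :=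
    funext fun t => by simpa using deriv_comp_mul_left σ Φ t
  refine ⟨hcont.comp (continuous_const_mul σ).continuousOn fun t ht => ?_,
    ⟨M, fun t ht => hM _ ?_⟩, by simpa using h0, fun t ht => ?_, fun t ht => ?_⟩
  · exact mul_nonneg hσ.le ht
  · exact mul_nonneg hσ.le ht
  · exact (hdiff _ (mul_pos hσ ht)).comp t ((differentiableAt_id).const_mul σ)
  · rw [hderiv, hB t ht]
    refine (((hode _ (mul_pos hσ ht)).comp t ((hasDerivAt_id t).const_mul σ)).const_mul
      σ).congr_deriv ?_
    simp only [mul_one]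
    ring

lemma hasDerivAt_wronskian (hΦ : IsSL A Φ) (hΨ : IsSL B Ψ) {t : ℝ} (ht : 0 < t) :
    HasDerivAt (wronskian Φ Ψ) ((B t - A t) * (Φ t * Ψ t)) t :=
  (((hΦ.hasDerivAt ht).mul (hΨ.hasDerivAt_deriv ht)).sub
    ((hΦ.hasDerivAt_deriv ht).mul (hΨ.hasDerivAt ht))).congr_deriv (by ring)

section

variable (hΦ : IsSL A Φ) (hA : ContinuousOn A (Ioi 0)) (hA₀ : ∀ t > 0, 0 ≤ A t)
  (hΨ : IsSL B Ψ) (hB : ContinuousOn B (Ioi 0)) (hB₀ : ∀ t > 0, 0 ≤ B t)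
  {a : ℝ} (ha : 0 < a) (hBA : ∀ t ≥ a, B t ≤ A t) (hlim : Tendsto Φ atTop (𝓝 0))
include hΦ hA hA₀ hΨ hB hB₀ ha hBA hlim

/-- The Wronskian decreases on `[a, ∞)` and is bounded below by `Φ t Ψ'(a) → 0`. -/
lemma wronskian_nonneg {s : ℝ} (hs : a ≤ s) : 0 ≤ wronskian Φ Ψ s := by
  have hanti : AntitoneOn (wronskian Φ Ψ) (Ici a) := by
    refine antitoneOn_of_hasDerivWithinAt_nonpos (convex_Ici a)
      (f' := fun t => (B t - A t) * (Φ t * Ψ t))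
      (fun t ht => (hΦ.hasDerivAt_wronskian hΨ (ha.trans_le ht)).continuousAt.continuousWithinAt)
      (fun t ht => ?_) (fun t ht => ?_) <;> rw [interior_Ici] at ht
    · exact (hΦ.hasDerivAt_wronskian hΨ (ha.trans ht)).hasDerivWithinAt
    · have ht0 := ha.trans ht
      exact mul_nonpos_of_nonpos_of_nonneg (sub_nonpos.2 (hBA t ht.le))
        (mul_nonneg (hΦ.pos hA hA₀ ht0.le).le (hΨ.pos hB hB₀ ht0.le).le)
  have hlower : ∀ t ≥ a, Φ t * deriv Ψ a ≤ wronskian Φ Ψ t := fun t ht => by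
    have ht0 := ha.trans_le ht
    have hΨ' := hΨ.monotoneOn_deriv hB hB₀ ha ht0 ht
    have hΦ' := mul_nonpos_of_nonpos_of_nonneg (hΦ.deriv_nonpos hA hA₀ ht0)
      (hΨ.pos hB hB₀ ht0.le).le
    have := mul_le_mul_of_nonneg_left hΨ' (hΦ.pos hA hA₀ ht0.le).le
    unfold wronskian
    linarith
  refine le_of_tendsto (f := fun t => Φ t * deriv Ψ a)
    (by simpa using hlim.mul_const (deriv Ψ a)) ?_
  filter_upwards [eventually_ge_atTop s] with t ht
  exact (hlower t (hs.trans ht)).trans (hanti hs (hs.trans ht) ht)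

/-- Sturm comparison: `Φ / Ψ` is antitone on `[a, ∞)`, its derivative being `-W / Ψ²`. -/
theorem mul_le_mul_of_coeff_le {t : ℝ} (ht : a ≤ t) : Φ t * Ψ a ≤ Φ a * Ψ t := by
  have hΨpos : ∀ s ≥ a, 0 < Ψ s := fun s hs => hΨ.pos hB hB₀ (ha.le.trans hs)
  have hquot : ∀ s ≥ a, HasDerivAt (fun s => Φ s / Ψ s) (-wronskian Φ Ψ s / Ψ s ^ 2) s :=
    fun s hs => ((hΦ.hasDerivAt (ha.trans_le hs)).div (hΨ.hasDerivAt (ha.trans_le hs))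
      (hΨpos s hs).ne').congr_deriv (by unfold wronskian; ring)
  have hanti : AntitoneOn (fun s => Φ s / Ψ s) (Ici a) := by
    refine antitoneOn_of_hasDerivWithinAt_nonpos (convex_Ici a)
      (f' := fun s => -wronskian Φ Ψ s / Ψ s ^ 2)
      (fun s hs => (hquot s hs).continuousAt.continuousWithinAt)
      (fun s hs => ?_) (fun s hs => ?_) <;> rw [interior_Ici] at hs
    · exact (hquot s hs.le).hasDerivWithinAt
    · exact div_nonpos_of_nonpos_of_nonneg
        (neg_nonpos.2 (wronskian_nonneg hΦ hA hA₀ hΨ hB hB₀ ha hBA hlim hs.le)) (sq_nonneg _)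
  have := hanti self_mem_Ici ht ht
  rwa [div_le_div_iff₀ (hΨpos t ht) (hΨpos a le_rfl)] at this

end

theorem le_comp_mul_div (hΦ : IsSL A Φ) (hA : ContinuousOn A (Ioi 0)) (hA₀ : ∀ t > 0, 0 ≤ A t)
    {β m : ℝ} (hβ : -1 < β) (hm : 0 < m) (hAm : ∀ t ≥ 1, m * t ^ β ≤ A t) {A₀ Φ₀ : ℝ → ℝ}
    (hΦ₀ : IsSL A₀ Φ₀) {σ : ℝ} (hσ : 0 < σ) (hscale : ∀ t > 0, m * t ^ β = σ ^ 2 * A₀ (σ * t))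
    {t : ℝ} (ht : 1 ≤ t) : Φ t ≤ Φ₀ (σ * t) / Φ₀ σ := by
  have hΨ := hΦ₀.comp_mul_left (B := fun t => m * t ^ β) hσ hscale
  have hB : ContinuousOn (fun t : ℝ => m * t ^ β) (Ioi 0) :=
    continuousOn_const.mul (continuousOn_id.rpow_const fun x hx => Or.inl (ne_of_gt hx))
  have hB₀ : ∀ t > 0, 0 ≤ m * t ^ β := fun t ht => by positivity
  have hcmp := hΦ.mul_le_mul_of_coeff_le hA hA₀ hΨ hB hB₀ one_pos hAm
    (hΦ.tendsto_atTop_zero hA hA₀ hβ hm hAm) ht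
  simp only [mul_one] at hcmp
  rw [le_div_iff₀ (by simpa using hΨ.pos hB hB₀ zero_le_one)]
  exact hcmp.trans (mul_le_of_le_one_left (hΨ.pos hB hB₀ (zero_le_one.trans ht)).le
    (hΦ.le_one hA hA₀ zero_le_one))

theorem exists_forall_abs_le {β m ε : ℝ} (hβ : -1 < β) (hm : 0 < m) (hε : 0 < ε) :
    ∃ T, ∀ t ≥ T, ∀ A Φ : ℝ → ℝ, IsSL A Φ → ContinuousOn A (Ioi 0) → (∀ s > 0, 0 ≤ A s) →
      (∀ s ≥ 1, m * s ^ β ≤ A s) → |Φ t| ≤ ε := by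
  obtain ⟨T, hT⟩ := eventually_atTop.1
    (((tendsto_div_mul_rpow_sub_one (r := β + 1) (by linarith) hm (2 * (β + 1))).eventually
      (ge_mem_nhds hε)).and (eventually_gt_atTop 1))
  refine ⟨T, fun t ht A Φ hΦ hA hA₀ hAm => ?_⟩
  obtain ⟨htε, ht1⟩ := hT t ht
  rw [abs_of_pos (hΦ.pos hA hA₀ (zero_le_one.trans ht1.le))]
  exact (hΦ.le_div_of_rpow_le hA hA₀ hβ hm hAm ht1).trans htε

end IsSL

lemma sInf_image_Ici_pos {p : ℝ → ℝ} {a c : ℝ} (hpc : ContinuousOn p (Ici a))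
    (hpos : ∀ u ≥ a, 0 < p u) (hc : 0 < c) (hlim : Tendsto p atTop (𝓝 c)) :
    0 < sInf (p '' Ici a) := by
  obtain ⟨V, hV⟩ := eventually_atTop.1 (hlim.eventually (eventually_gt_nhds (half_lt_self hc)))
  obtain ⟨u₀, hu₀, hmin⟩ := (isCompact_Icc (a := a) (b := max a V)).exists_isMinOn
    ⟨a, le_rfl, le_max_left _ _⟩ (hpc.mono Icc_subset_Ici_self)
  refine (lt_min (hpos u₀ hu₀.1) (half_pos hc)).trans_le
    (le_csInf (nonempty_Ici.image p) (forall_mem_image.2 fun u (hu : a ≤ u) => ?_))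
  rcases le_or_gt u (max a V) with huV | hVu
  · exact (min_le_left _ _).trans (hmin ⟨hu, huV⟩)
  · exact (min_le_right _ _).trans (hV u (le_of_max_le_right hVu.le)).le

lemma rpow_mul_comp_mul_bounds {β m L : ℝ} {p : ℝ → ℝ} (hpc : ContinuousOn p (Ioi 0))
    (hppos : ∀ u > 0, 0 < p u) (hpm : ∀ v ≥ 1, m ≤ p v) (hL : 1 ≤ L) :
    ContinuousOn (fun u => u ^ β * p (u * L)) (Ioi 0) ∧ (∀ t > 0, 0 ≤ t ^ β * p (t * L)) ∧
      ∀ t ≥ 1, m * t ^ β ≤ t ^ β * p (t * L) := by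
  have hL0 : 0 < L := one_pos.trans_le hL
  refine ⟨(continuousOn_id.rpow_const fun x hx => Or.inl (ne_of_gt hx)).mul
    (hpc.comp (continuousOn_id.mul continuousOn_const) fun x hx => mul_pos hx hL0),
    fun t ht => (mul_pos (Real.rpow_pos_of_pos ht β) (hppos _ (mul_pos ht hL0))).le,
    fun t ht => ?_⟩
  rw [mul_comm]
  exact mul_le_mul_of_nonneg_left (hpm _ (one_le_mul_of_one_le_of_one_le ht hL))
    (Real.rpow_nonneg (zero_le_one.trans ht) β)

lemma rpow_one_div_add_two_scaling {β δ : ℝ} (hβ : β + 2 ≠ 0) (hδ : 0 < δ) (c : ℝ) {t : ℝ}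
    (ht : 0 ≤ t) :
    (δ ^ (1 / (β + 2))) ^ 2 * (c * (δ ^ (1 / (β + 2)) * t) ^ β) = c * δ * t ^ β := by
  have hσ : 0 < δ ^ (1 / (β + 2)) := Real.rpow_pos_of_pos hδ _
  have hσδ : (δ ^ (1 / (β + 2))) ^ 2 * (δ ^ (1 / (β + 2))) ^ β = δ := by
    rw [← Real.rpow_natCast, ← Real.rpow_add hσ, ← Real.rpow_mul hδ.le,
      show 1 / (β + 2) * ((2 : ℕ) + β) = 1 by field_simp; push_cast; ring, Real.rpow_one]
  rw [Real.mul_rpow hσ.le ht]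
  linear_combination (c * t ^ β) * hσδ

theorem phi_lambda_uniform_decay_general
    (β c : ℝ) (hβ : -1 < β) (hc : 0 < c)
    (p : ℝ → ℝ) (hpc : ContinuousOn p (Set.Ioi 0)) (hppos : ∀ u > (0:ℝ), 0 < p u)
    (hplim : Filter.Tendsto p Filter.atTop (nhds c)) :
    let δ : ℝ := c⁻¹ * sInf (p '' Set.Ici 1)
    0 < δ ∧
    (∀ lam : ℝ, 0 < lam → lam ≤ 1 → ∀ t ≥ (1:ℝ),
      ∀ Φlam Φ₀ : ℝ → ℝ,
        IsSL (fun u => u ^ β * p (u * lam ^ (-(1 / (β + 2))))) Φlam →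
        IsSL (fun u => c * u ^ β) Φ₀ →
        Φlam t ≤ Φ₀ (δ ^ (1 / (β + 2)) * t) / Φ₀ (δ ^ (1 / (β + 2)))) ∧
    (∀ ε > (0:ℝ), ∃ T : ℝ, ∀ t ≥ T, ∀ lam : ℝ, 0 < lam → lam ≤ 1 →
      ∀ Φ : ℝ → ℝ, IsSL (fun u => u ^ β * p (u * lam ^ (-(1 / (β + 2))))) Φ →
        |Φ t| ≤ ε) := by
  intro δ
  set m := sInf (p '' Ici 1)
  have hp1 : ∀ u ≥ (1 : ℝ), 0 < p u := fun u hu => hppos u (one_pos.trans_le hu)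
  have hm : 0 < m := sInf_image_Ici_pos (hpc.mono (Ici_subset_Ioi.2 one_pos)) hp1 hc hplim
  have hpm : ∀ v ≥ 1, m ≤ p v := fun v hv =>
    csInf_le ⟨0, forall_mem_image.2 fun u hu => (hp1 u hu).le⟩ ⟨v, hv, rfl⟩
  have hbounds : ∀ lam : ℝ, 0 < lam → lam ≤ 1 → _ := fun lam hlam hlam1 =>
    rpow_mul_comp_mul_bounds (β := β) (L := lam ^ (-(1 / (β + 2)))) hpc hppos hpm
      (Real.one_le_rpow_of_pos_of_le_one_of_nonpos hlam hlam1
        (neg_nonpos.2 (one_div_nonneg.2 (by linarith))))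
  have hδ : 0 < δ := mul_pos (inv_pos.2 hc) hm
  refine ⟨hδ, fun lam hlam hlam1 t ht Φ Φ₀ hΦ hΦ₀ => ?_, fun ε hε => ?_⟩
  · obtain ⟨hA, hA₀, hAm⟩ := hbounds lam hlam hlam1
    refine hΦ.le_comp_mul_div hA hA₀ hβ hm hAm hΦ₀ (Real.rpow_pos_of_pos hδ _)
      (fun s hs => ?_) ht
    rw [rpow_one_div_add_two_scaling (by linarith) hδ c hs.le, mul_inv_cancel_left₀ hc.ne']
  · obtain ⟨T, hT⟩ := IsSL.exists_forall_abs_le hβ hm hε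
    refine ⟨T, fun t ht lam hlam hlam1 Φ hΦ => ?_⟩
    obtain ⟨hA, hA₀, hAm⟩ := hbounds lam hlam hlam1
    exact hT t ht _ Φ hΦ hA hA₀ hAm

theorem phi_lambda_uniform_decay
    (β c C : ℝ) (hβ : -1 < β) (hc : 0 < c) (hC : 0 < C)
    (p : ℝ → ℝ) (hpc : ContinuousOn p (Set.Ioi 0)) (hppos : ∀ u > (0:ℝ), 0 < p u)
    (hplim : Filter.Tendsto p Filter.atTop (nhds c))
    (hpbd₁ : β ≤ 0 → ∀ u > (0:ℝ), p u ≤ C)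
    (hpbd₂ : 0 < β → ∀ u > (0:ℝ), p u ≤ C * (1 + u ^ (-β))) :
    let δ : ℝ := c⁻¹ * sInf (p '' Set.Ici 1)
    0 < δ ∧
    (∀ lam : ℝ, 0 < lam → lam ≤ 1 → ∀ t ≥ (1:ℝ),
      ∀ Φlam Φ₀ : ℝ → ℝ,
        IsSL (fun u => u ^ β * p (u * lam ^ (-(1 / (β + 2))))) Φlam →
        IsSL (fun u => c * u ^ β) Φ₀ →
        Φlam t ≤ Φ₀ (δ ^ (1 / (β + 2)) * t) / Φ₀ (δ ^ (1 / (β + 2)))) ∧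
    (∀ ε > (0:ℝ), ∃ T : ℝ, ∀ t ≥ T, ∀ lam : ℝ, 0 < lam → lam ≤ 1 →
      ∀ Φ : ℝ → ℝ, IsSL (fun u => u ^ β * p (u * lam ^ (-(1 / (β + 2))))) Φ →
        |Φ t| ≤ ε) :=
  phi_lambda_uniform_decay_general β c hβ hc p hpc hppos hplim
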